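/- arXiv:2504.11759 — 6 statements merged into one kernel-verified Lean document; each statement's English description precedes it below -/
import Mathlib

section
/- If R ⊆ [K] is self-consistent at level α, i.e., every i ∈ R satisfies E_i ≥ K/(α|R|), then for every nonempty A ⊆ [K], the arithmetic mean e-value E_A = (∑_{i∈A} E_i)/|A| satisfies E_A ≥ FDP_A(R)/α, where FDP_A(R) = |A∩R|/max(|R|,1). In other words, every self-consistent rejection set lies in the closed candidate set C̄. -/
open Finset

/-- The false discovery proportion `FDP_A(R) = |A ∩ R| / max(|R|, 1)`. -/
noncomputable def FDP {K : ℕ} (A R : Finset (Fin K)) : ℝ :=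
  ((A ∩ R).card : ℝ) / max (R.card : ℝ) 1

/-! Each of the `|A ∩ R|` indices of `A ∩ R` contributes at least `K / (α|R|)` to
`∑_{i ∈ A} E_i`, and `|A| ≤ K`; so the mean over `A` is at least `|A ∩ R| / (α|R|)`. -/

/-- The `max (·) 1` guard is only active when `R = ∅`, where `A ∩ R = ∅` as well. -/
theorem FDP_eq_card_inter_div_card {K : ℕ} (A R : Finset (Fin K)) :
    FDP A R = ((A ∩ R).card : ℝ) / R.card := by
  rcases R.eq_empty_or_nonempty with rfl | hR
  · simp [FDP]
  · rw [FDP, max_eq_left (by exact_mod_cast hR.card_pos)]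

theorem card_inter_mul_le_sum {ι : Type*} [DecidableEq ι] (A R : Finset ι)
    {E : ι → ℝ} {c : ℝ}
    (hE : ∀ i ∈ A, 0 ≤ E i) (hc : ∀ i ∈ R, c ≤ E i) :
    (A ∩ R).card * c ≤ ∑ i ∈ A, E i :=
  calc (A ∩ R).card * c ≤ ∑ i ∈ A ∩ R, E i := by
        simpa using card_nsmul_le_sum (A ∩ R) E c fun i hi => hc i (mem_inter.mp hi).2
    _ ≤ ∑ i ∈ A, E i := sum_le_sum_of_subset_of_nonneg inter_subset_left fun i hi _ => hE i hi

theorem stmt1_general (K : ℕ) (α : ℝ) (hα : 0 < α)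
    (E : Fin K → ℝ) (hE : ∀ i, 0 ≤ E i) (R : Finset (Fin K))
    (hSC : ∀ i ∈ R, E i ≥ (K : ℝ) / (α * R.card)) :
    ∀ A : Finset (Fin K), A.Nonempty →
      (∑ i ∈ A, E i) / (A.card : ℝ) ≥ FDP A R / α := by
  intro A hA
  have hAK : (A.card : ℝ) ≤ K := by
    exact_mod_cast (card_le_univ A).trans_eq (Fintype.card_fin K)
  rw [FDP_eq_card_inter_div_card, ge_iff_le, div_div,
    le_div_iff₀ (by exact_mod_cast hA.card_pos)]
  calc ((A ∩ R).card : ℝ) / (R.card * α) * A.card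
      ≤ (A ∩ R).card / (R.card * α) * K := by gcongr
    _ = (A ∩ R).card * (K / (α * R.card)) := by ring
    _ ≤ ∑ i ∈ A, E i := card_inter_mul_le_sum A R (fun i _ => hE i) hSC

/-- every self-consistent rejection set lies in the closed candidate set:
if every `i ∈ R` has `E_i ≥ K/(α|R|)`, then for every nonempty `A`,
the arithmetic mean `E_A` satisfies `E_A ≥ FDP_A(R)/α`. -/
theorem stmt1 (K : ℕ) (hK : 0 < K) (α : ℝ) (hα : 0 < α) (hα1 : α ≤ 1)
    (E : Fin K → ℝ) (hE : ∀ i, 0 ≤ E i) (R : Finset (Fin K))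
    (hSC : ∀ i ∈ R, E i ≥ (K : ℝ) / (α * R.card)) :
    ∀ A : Finset (Fin K), A.Nonempty →
      (∑ i ∈ A, E i) / (A.card : ℝ) ≥ FDP A R / α :=
  stmt1_general K α hα E hE R hSC
end

section
/- If each E_i is an e-value for hypothesis H_i (expectation at most 1 under any distribution in H_i), then for any procedure whose output R always lies in the closed candidate set C̄, the false discovery rate is at most α: E[FDP_{A*}(R)] ≤ α, where A* is the true null set. -/
open Finset MeasureTheory

/-- if each `E_i` is an e-value under the true null set `A*`
(`E[E_i] ≤ 1` for `i ∈ A*`), then any procedure whose (random) output `R` almost surely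
lies in the closed candidate set `C̄` controls the FDR: `E[FDP_{A*}(R)] ≤ α`. -/
theorem stmt3 {Ω : Type*} [MeasurableSpace Ω] (μ : Measure Ω) [IsProbabilityMeasure μ]
    (K : ℕ) (hK : 0 < K) (α : ℝ) (hα : 0 < α) (hα1 : α ≤ 1)
    (E : Fin K → Ω → ℝ) (hEnn : ∀ i ω, 0 ≤ E i ω)
    (Astar : Finset (Fin K))
    (hInt : ∀ i ∈ Astar, Integrable (E i) μ)
    (hEv : ∀ i ∈ Astar, ∫ ω, E i ω ∂μ ≤ 1)
    (R : Ω → Finset (Fin K))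
    (hR : ∀ᵐ ω ∂μ, ∀ A : Finset (Fin K), A.Nonempty →
      (∑ i ∈ A, E i ω) / (A.card : ℝ) ≥ FDP A (R ω) / α)
    (hIntF : Integrable (fun ω => FDP Astar (R ω)) μ) :
    ∫ ω, FDP Astar (R ω) ∂μ ≤ α := by
  rcases Astar.eq_empty_or_nonempty with hA | hA
  · simp only [hA, FDP, Finset.empty_inter, Finset.card_empty, Nat.cast_zero, zero_div]
    simpa using hα.le
  · have hn : (0 : ℝ) < (Astar.card : ℝ) := by
      exact_mod_cast Finset.card_pos.mpr hA
    -- pointwise a.e. bound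
    have hle : ∀ᵐ ω ∂μ, FDP Astar (R ω) ≤
        α * ((∑ i ∈ Astar, E i ω) / (Astar.card : ℝ)) := by
      filter_upwards [hR] with ω h
      have := h Astar hA
      have h2 : FDP Astar (R ω) / α ≤ (∑ i ∈ Astar, E i ω) / (Astar.card : ℝ) := this
      calc FDP Astar (R ω) = α * (FDP Astar (R ω) / α) := by field_simp
        _ ≤ α * ((∑ i ∈ Astar, E i ω) / (Astar.card : ℝ)) := by
            exact mul_le_mul_of_nonneg_left h2 hα.le
    have hIntSum : Integrable (fun ω => ∑ i ∈ Astar, E i ω) μ :=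
      integrable_finset_sum _ hInt
    have hIntRHS : Integrable (fun ω =>
        α * ((∑ i ∈ Astar, E i ω) / (Astar.card : ℝ))) μ := by
      simpa [mul_div_assoc] using (hIntSum.div_const (Astar.card : ℝ)).const_mul α
    calc ∫ ω, FDP Astar (R ω) ∂μ
        ≤ ∫ ω, α * ((∑ i ∈ Astar, E i ω) / (Astar.card : ℝ)) ∂μ :=
          integral_mono_ae hIntF hIntRHS hle
      _ = α * ((∫ ω, ∑ i ∈ Astar, E i ω ∂μ) / (Astar.card : ℝ)) := by
          rw [integral_const_mul, integral_div]
      _ = α * ((∑ i ∈ Astar, ∫ ω, E i ω ∂μ) / (Astar.card : ℝ)) := by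
          rw [integral_finset_sum _ hInt]
      _ ≤ α * ((Astar.card : ℝ) / (Astar.card : ℝ)) := by
          apply mul_le_mul_of_nonneg_left _ hα.le
          have : ∑ i ∈ Astar, ∫ ω, E i ω ∂μ ≤ (Astar.card : ℝ) := by
            calc ∑ i ∈ Astar, ∫ ω, E i ω ∂μ ≤ ∑ _i ∈ Astar, (1:ℝ) :=
                  Finset.sum_le_sum hEv
              _ = (Astar.card : ℝ) := by simp
          exact div_le_div_of_nonneg_right this hn.le |>.trans_eq rfl
      _ = α := by rw [div_self hn.ne', mul_one]
end

section
/- The minimally adaptive eBH discovery set is contained in the closed eBH discovery set: R^{eBHm} ⊆ R^{c-eBH}, where R^{eBHm} applies eBH with threshold (K−1)/(αk) subject to the global average e-value exceeding 1/α. -/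
open Finset
open scoped Classical

/-- `R_k`: the indices of the `k` largest e-values, given a sorting permutation `σ`. -/
noncomputable def Rk {K : ℕ} (σ : Fin K ≃ Fin K) (k : ℕ) : Finset (Fin K) :=
  (univ.filter (fun i : Fin K => (i : ℕ) < k)).image σ

/-- Membership in the closed candidate set `C̄`. -/
def Cbar {K : ℕ} (α : ℝ) (E : Fin K → ℝ) (R : Finset (Fin K)) : Prop :=
  ∀ A : Finset (Fin K), A.Nonempty → (∑ i ∈ A, E i) / (A.card : ℝ) ≥ FDP A R / α

/-- `k̄`: the largest `k ≤ K` with `R_k ∈ C̄`; `R^{c-eBH} = R_k̄`. -/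
noncomputable def kCbar (K : ℕ) (α : ℝ) (E : Fin K → ℝ) (σ : Fin K ≃ Fin K) : ℕ :=
  sSup {k | k ≤ K ∧ Cbar α E (Rk σ k)}

/-- `k^{eBHm}`: the largest `k ∈ [K]` such that the global average e-value is `≥ 1/α`
and at least `k` e-values are `≥ (K−1)/(αk)` (`0` if no such `k` exists). -/
noncomputable def kEBHm (K : ℕ) (α : ℝ) (E : Fin K → ℝ) : ℕ :=
  sSup {k | 1 ≤ k ∧ k ≤ K ∧ (∑ i, E i) / (K : ℝ) ≥ 1 / α ∧
    k ≤ (univ.filter (fun i => E i ≥ ((K : ℝ) - 1) / (α * k))).card}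

lemma card_filter_lt_fin (K k : ℕ) (h : k ≤ K) :
    (univ.filter (fun i : Fin K => (i : ℕ) < k)).card = k := by
  have he : (univ.filter (fun i : Fin K => (i : ℕ) < k)) =
      (range k).attachFin (fun m hm => lt_of_lt_of_le (mem_range.mp hm) h) := by
    ext i; simp
  rw [he, card_attachFin, card_range]

/-- the minimally adaptive eBH discovery set is contained in the
closed eBH discovery set: `R^{eBHm} ⊆ R^{c-eBH}`. -/
theorem stmt5 (K : ℕ) (hK : 2 ≤ K) (α : ℝ) (hα : 0 < α) (hα1 : α ≤ 1)
    (E : Fin K → ℝ) (hE : ∀ i, 0 ≤ E i) (σ : Fin K ≃ Fin K)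
    (hσ : ∀ i j : Fin K, i ≤ j → E (σ j) ≤ E (σ i)) :
    Rk σ (kEBHm K α E) ⊆ Rk σ (kCbar K α E σ) := by
  set m := kEBHm K α E with hm
  rcases Nat.eq_zero_or_pos m with h0 | hpos
  · rw [h0]; intro x hx; simp [Rk] at hx
  -- m belongs to its defining set
  have hSne : {k | 1 ≤ k ∧ k ≤ K ∧ (∑ i, E i) / (K : ℝ) ≥ 1 / α ∧
      k ≤ (univ.filter (fun i => E i ≥ ((K : ℝ) - 1) / (α * k))).card}.Nonempty := by
    by_contra h
    rw [Set.not_nonempty_iff_eq_empty] at h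
    rw [hm, kEBHm, h] at hpos
    simp [csSup_empty] at hpos
  have hSbdd : BddAbove {k | 1 ≤ k ∧ k ≤ K ∧ (∑ i, E i) / (K : ℝ) ≥ 1 / α ∧
      k ≤ (univ.filter (fun i => E i ≥ ((K : ℝ) - 1) / (α * k))).card} :=
    ⟨K, fun k hk => hk.2.1⟩
  have hSmem : m ∈ {k | 1 ≤ k ∧ k ≤ K ∧ (∑ i, E i) / (K : ℝ) ≥ 1 / α ∧
      k ≤ (univ.filter (fun i => E i ≥ ((K : ℝ) - 1) / (α * k))).card} := by
    rw [hm]; exact Nat.sSup_mem hSne hSbdd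
  obtain ⟨h1m, hmK, havg, hcount⟩ := hSmem
  set τ : ℝ := ((K : ℝ) - 1) / (α * m) with hτdef
  -- every element of Rk σ m has e-value ≥ τ
  have hτ : ∀ i ∈ Rk σ m, τ ≤ E i := by
    intro i hi
    simp only [Rk, mem_image, mem_filter, mem_univ, true_and] at hi
    obtain ⟨j, hj, rfl⟩ := hi
    by_contra hlt
    push_neg at hlt
    -- the set T' = {j' | τ ≤ E (σ j')} is contained in {j' | j' < j}
    have hsub : (univ.filter (fun j' : Fin K => τ ≤ E (σ j'))) ⊆
        (univ.filter (fun j' : Fin K => (j' : ℕ) < (j : ℕ))) := by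
      intro j' hj'
      simp only [mem_filter, mem_univ, true_and] at hj' ⊢
      by_contra hge
      push_neg at hge
      have : j ≤ j' := by exact_mod_cast hge
      exact absurd (le_trans hj' (hσ j j' this)) (not_le.mpr hlt)
    have hcard' : (univ.filter (fun j' : Fin K => τ ≤ E (σ j'))).card ≤ (j : ℕ) := by
      calc _ ≤ (univ.filter (fun j' : Fin K => (j' : ℕ) < (j : ℕ))).card :=
            card_le_card hsub
        _ = (j : ℕ) := card_filter_lt_fin K j (le_of_lt j.isLt)
    -- but that filter has card ≥ m via the bijection σ
    have heq : (univ.filter (fun j' : Fin K => τ ≤ E (σ j'))).card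
        = (univ.filter (fun i : Fin K => E i ≥ τ)).card := by
      apply card_bij (fun j' _ => σ j')
      · intro a ha; simp only [mem_filter, mem_univ, true_and] at ha ⊢; exact ha
      · intro a _ b _ hab; exact σ.injective hab
      · intro b hb
        simp only [mem_filter, mem_univ, true_and] at hb
        exact ⟨σ.symm b, by simp only [mem_filter, mem_univ, true_and,
          Equiv.apply_symm_apply]; exact hb, by simp⟩
    omega
  have hcardR : (Rk σ m).card = m := by
    rw [Rk, card_image_of_injective _ σ.injective, card_filter_lt_fin K m hmK]
  -- Cbar holds for Rk σ m
  have hCbar : Cbar α E (Rk σ m) := by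
    intro A hA
    set b : ℝ := ((A ∩ Rk σ m).card : ℝ) with hb
    have hb0 : 0 ≤ b := Nat.cast_nonneg _
    have hbm : b ≤ (m : ℝ) := by
      have h' := card_le_card (inter_subset_right : A ∩ Rk σ m ⊆ Rk σ m)
      rw [hcardR] at h'
      rw [hb]; exact_mod_cast h'
    have hm1 : (1 : ℝ) ≤ (m : ℝ) := by exact_mod_cast hpos
    have hFDP : FDP A (Rk σ m) = b / m := by
      rw [FDP, hcardR, max_eq_left hm1]
    have ha0 : (0 : ℝ) < (A.card : ℝ) := by exact_mod_cast hA.card_pos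
    have hm0 : (0 : ℝ) < (m : ℝ) := lt_of_lt_of_le one_pos hm1
    -- sum over A bounds
    have hsumA : b * τ ≤ ∑ i ∈ A, E i := by
      have h1 : (A ∩ Rk σ m).card • τ ≤ ∑ i ∈ A ∩ Rk σ m, E i :=
        card_nsmul_le_sum _ _ _ (fun i hi => hτ i (mem_of_mem_inter_right hi))
      have h2 : ∑ i ∈ A ∩ Rk σ m, E i ≤ ∑ i ∈ A, E i :=
        sum_le_sum_of_subset_of_nonneg inter_subset_left (fun i _ _ => hE i)
      rw [nsmul_eq_mul] at h1
      exact le_trans h1 h2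
    rw [hFDP, ge_iff_le, div_div, div_le_div_iff₀ (by positivity) ha0]
    -- goal : b * A.card ≤ (∑ i ∈ A, E i) * (m * α)
    rcases eq_or_lt_of_le (show A.card ≤ K from le_trans (card_le_card (subset_univ A))
        (le_of_eq (by simp))) with hKa | hKa
    · -- A = univ
      have hAuniv : A = univ := eq_univ_of_card A (by simpa using hKa)
      have hKsum : (K : ℝ) ≤ (∑ i, E i) * α := by
        rw [ge_iff_le, div_le_div_iff₀ hα (by positivity)] at havg
        linarith
      have hKR : (0:ℝ) ≤ (K:ℝ) := by positivity
      rw [hAuniv]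
      have : ((univ : Finset (Fin K)).card : ℝ) = (K : ℝ) := by simp
      rw [this]
      nlinarith [mul_le_mul_of_nonneg_right hbm hKR,
        mul_le_mul_of_nonneg_left hKsum (le_of_lt hm0)]
    · -- A.card ≤ K - 1
      have haK1 : (A.card : ℝ) ≤ (K : ℝ) - 1 := by
        have : A.card + 1 ≤ K := hKa
        have := Nat.cast_le (α := ℝ).mpr this
        push_cast at this
        linarith
      have hsum' : b * ((K:ℝ) - 1) ≤ (∑ i ∈ A, E i) * (α * m) := by
        rw [hτdef, ← mul_div_assoc] at hsumA
        exact (div_le_iff₀ (by positivity : (0:ℝ) < α * m)).mp hsumA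
      nlinarith [hsum', hb0, haK1]
  have hle : m ≤ kCbar K α E σ := by
    apply le_csSup ⟨K, fun k hk => hk.1⟩
    exact ⟨hmK, hCbar⟩
  intro x hx
  simp only [Rk, mem_image, mem_filter, mem_univ, true_and] at hx ⊢
  obtain ⟨i, hi, rfl⟩ := hx
  exact ⟨i, lt_of_lt_of_le hi hle, rfl⟩
end

section
/- If E_i ≥ 1/α for every i ∈ R, then R lies in C̄ with respect to the indicator error metric for FWER: for every A ⊆ [K] with A∩R ≠ ∅, E_A ≥ 1/α. Consequently, the set of all i such that E_A ≥ 1/α for every A containing i controls FWER: if E[E_i] ≤ 1 for i ∈ A*, then P(R ∩ A* ≠ ∅) ≤ α for this rejection set. -/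
/-!
Every `i ∈ R ω` certifies `E_A(ω) ≥ 1/α` for *every* `A ∋ i`, in particular for `A = A*`.
So `R ∩ A* ≠ ∅` forces the average `E_{A*}` of the null e-values to be at least `1/α`. That
average is itself an e-value, so Markov's inequality bounds the probability of this event by `α`.
-/

open Finset MeasureTheory
open scoped Classical

noncomputable section

variable {Ω ι : Type*}

def eMean (E : ι → Ω → ℝ) (A : Finset ι) (ω : Ω) : ℝ :=
  (∑ j ∈ A, E j ω) / (A.card : ℝ)

lemma eMean_nonneg {E : ι → Ω → ℝ} (hE : ∀ i ω, 0 ≤ E i ω) (A : Finset ι) (ω : Ω) :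
    0 ≤ eMean E A ω :=
  div_nonneg (sum_nonneg fun j _ => hE j ω) A.card.cast_nonneg

variable [MeasurableSpace Ω] {μ : Measure Ω}

lemma integrable_eMean {E : ι → Ω → ℝ} {A : Finset ι} (hInt : ∀ i ∈ A, Integrable (E i) μ) :
    Integrable (eMean E A) μ :=
  (integrable_finsetSum A hInt).div_const _

-- For `A = ∅` the mean is `0`, since `x / 0 = 0`.
lemma integral_eMean_le_one {E : ι → Ω → ℝ} {A : Finset ι}
    (hInt : ∀ i ∈ A, Integrable (E i) μ) (hEv : ∀ i ∈ A, ∫ ω, E i ω ∂μ ≤ 1) :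
    ∫ ω, eMean E A ω ∂μ ≤ 1 := by
  have hsum : ∑ j ∈ A, ∫ ω, E j ω ∂μ ≤ A.card := by
    simpa using sum_le_sum hEv
  calc ∫ ω, eMean E A ω ∂μ = (∑ j ∈ A, ∫ ω, E j ω ∂μ) / A.card := by
        simp only [eMean, integral_div, integral_finsetSum A hInt]
    _ ≤ (A.card : ℝ) / A.card := by gcongr
    _ ≤ 1 := div_self_le_one _

lemma measure_one_div_le_le_ofReal [IsFiniteMeasure μ] {X : Ω → ℝ} (hX : 0 ≤ᵐ[μ] X)
    (hXi : Integrable X μ) (hX1 : ∫ ω, X ω ∂μ ≤ 1) {α : ℝ} (hα : 0 < α) :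
    μ {ω | 1 / α ≤ X ω} ≤ ENNReal.ofReal α := by
  have hmarkov : 1 / α * μ.real {ω | 1 / α ≤ X ω} ≤ 1 :=
    (mul_meas_ge_le_integral_of_nonneg hX hXi _).trans hX1
  rw [← ofReal_measureReal]
  refine ENNReal.ofReal_le_ofReal ?_
  rwa [one_div_mul_eq_div, div_le_one hα] at hmarkov

end

theorem stmt8_general {Ω : Type*} [MeasurableSpace Ω] (μ : Measure Ω) [IsProbabilityMeasure μ]
    (K : ℕ) (α : ℝ) (hα : 0 < α)
    (E : Fin K → Ω → ℝ) (hEnn : ∀ i ω, 0 ≤ E i ω)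
    (Astar : Finset (Fin K))
    (hInt : ∀ i ∈ Astar, Integrable (E i) μ)
    (hEv : ∀ i ∈ Astar, ∫ ω, E i ω ∂μ ≤ 1)
    (R : Ω → Finset (Fin K))
    (hRdef : ∀ ω, R ω = univ.filter (fun i : Fin K => ∀ A : Finset (Fin K), i ∈ A →
      (∑ j ∈ A, E j ω) / (A.card : ℝ) ≥ 1 / α)) :
    (∀ ω, ∀ A : Finset (Fin K), (A ∩ R ω).Nonempty →
      (∑ j ∈ A, E j ω) / (A.card : ℝ) ≥ 1 / α) ∧
    μ {ω | (R ω ∩ Astar).Nonempty} ≤ ENNReal.ofReal α := by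
  have hR : ∀ ω A, (A ∩ R ω).Nonempty → 1 / α ≤ eMean E A ω := by
    rintro ω A ⟨i, hi⟩
    rw [mem_inter, hRdef, mem_filter] at hi
    exact hi.2.2 A hi.1
  refine ⟨hR, ?_⟩
  calc μ {ω | (R ω ∩ Astar).Nonempty} ≤ μ {ω | 1 / α ≤ eMean E Astar ω} :=
        measure_mono fun ω h => hR ω Astar (by rwa [inter_comm])
    _ ≤ ENNReal.ofReal α :=
        measure_one_div_le_le_ofReal (ae_of_all μ (eMean_nonneg hEnn Astar))
          (integrable_eMean hInt) (integral_eMean_le_one hInt hEv) hα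

/-- the e-Holm rejection set `R = {i : E_A ≥ 1/α for all A ∋ i}` lies in the
closed candidate set for the FWER indicator error metric: every `A` with `A ∩ R ≠ ∅` has
`E_A ≥ 1/α`. Consequently, if `E[E_i] ≤ 1` for `i ∈ A*`, then `P(R ∩ A* ≠ ∅) ≤ α`. -/
theorem stmt8 {Ω : Type*} [MeasurableSpace Ω] (μ : Measure Ω) [IsProbabilityMeasure μ]
    (K : ℕ) (hK : 0 < K) (α : ℝ) (hα : 0 < α) (hα1 : α ≤ 1)
    (E : Fin K → Ω → ℝ) (hEnn : ∀ i ω, 0 ≤ E i ω)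
    (hMeas : ∀ i, Measurable (E i))
    (Astar : Finset (Fin K))
    (hInt : ∀ i ∈ Astar, Integrable (E i) μ)
    (hEv : ∀ i ∈ Astar, ∫ ω, E i ω ∂μ ≤ 1)
    (R : Ω → Finset (Fin K))
    (hRdef : ∀ ω, R ω = univ.filter (fun i : Fin K => ∀ A : Finset (Fin K), i ∈ A →
      (∑ j ∈ A, E j ω) / (A.card : ℝ) ≥ 1 / α)) :
    (∀ ω, ∀ A : Finset (Fin K), (A ∩ R ω).Nonempty →
      (∑ j ∈ A, E j ω) / (A.card : ℝ) ≥ 1 / α) ∧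
    μ {ω | (R ω ∩ Astar).Nonempty} ≤ ENNReal.ofReal α :=
  stmt8_general μ K α hα E hEnn Astar hInt hEv R hRdef
end

section
/- Compound e-value closure: if (Ẽ_1,...,Ẽ_K) are nonnegative reals and R^eBH is the eBH set applied to them (largest self-consistent set), then for every nonempty A ⊆ [K], (1/K)∑_{i∈A} Ẽ_i ≥ FDP_A(R^eBH)/α; hence R^eBH lies in the closed candidate set built from E_A := (1/K)∑_{i∈A}Ẽ_i. -/
open Finset
open scoped Classical

/-- `k^eBH`: the largest `k ≤ K` such that at least `k` e-values are `≥ K/(αk)`. -/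
noncomputable def kEBH (K : ℕ) (α : ℝ) (E : Fin K → ℝ) : ℕ :=
  sSup {k | k ≤ K ∧ k ≤ (univ.filter (fun i => E i ≥ (K : ℝ) / (α * k))).card}

/-- The eBH discovery set (the largest self-consistent set),
`R^eBH = {i : E_i ≥ K/(α k^eBH)}` (empty if `k^eBH = 0`). -/
noncomputable def ReBH (K : ℕ) (α : ℝ) (E : Fin K → ℝ) : Finset (Fin K) :=
  if kEBH K α E = 0 then ∅
  else univ.filter (fun i => E i ≥ (K : ℝ) / (α * kEBH K α E))

/-- compound e-value closure. For compound e-values `Ẽ`, the eBH set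
applied to them satisfies, for every nonempty `A`, `(1/K) ∑_{i∈A} Ẽ_i ≥ FDP_A(R^eBH)/α`;
hence `R^eBH` lies in the closed candidate set built from `E_A := (1/K) ∑_{i∈A} Ẽ_i`. -/
theorem stmt13 (K : ℕ) (hK : 0 < K) (α : ℝ) (hα : 0 < α) (hα1 : α ≤ 1)
    (Etil : Fin K → ℝ) (hEnn : ∀ i, 0 ≤ Etil i) :
    ∀ A : Finset (Fin K), A.Nonempty →
      (∑ i ∈ A, Etil i) / (K : ℝ) ≥ FDP A (ReBH K α Etil) / α := by
  intro A hA
  have hSmem : kEBH K α Etil ∈ {k | k ≤ K ∧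
      k ≤ (univ.filter (fun i => Etil i ≥ (K : ℝ) / (α * k))).card} := by
    apply Nat.sSup_mem ⟨0, by simp⟩ ⟨K, fun n hn => hn.1⟩
  obtain ⟨hkK, hkcard⟩ := hSmem
  set k := kEBH K α Etil with hkdef
  by_cases hk0 : k = 0
  · have hR : ReBH K α Etil = ∅ := by simp [ReBH, ← hkdef, hk0]
    rw [hR]
    simp only [FDP, inter_empty, card_empty, Nat.cast_zero, zero_div, ge_iff_le]
    exact div_nonneg (Finset.sum_nonneg fun i _ => hEnn i) (Nat.cast_nonneg K)
  · have hkpos : 0 < k := Nat.pos_of_ne_zero hk0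
    have hR : ReBH K α Etil = univ.filter (fun i => Etil i ≥ (K : ℝ) / (α * k)) := by
      simp [ReBH, ← hkdef, hk0]
    have hRcard : (k : ℝ) ≤ (ReBH K α Etil).card := by
      rw [hR]; exact_mod_cast hkcard
    have hmem : ∀ i ∈ ReBH K α Etil, Etil i ≥ (K : ℝ) / (α * k) := by
      intro i hi; rw [hR] at hi; exact (mem_filter.mp hi).2
    set R := ReBH K α Etil
    have hsum : ((A ∩ R).card : ℝ) * ((K : ℝ) / (α * k)) ≤ ∑ i ∈ A, Etil i := by
      calc ((A ∩ R).card : ℝ) * ((K : ℝ) / (α * k))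
          = ∑ _i ∈ A ∩ R, (K : ℝ) / (α * k) := by rw [Finset.sum_const, nsmul_eq_mul]
        _ ≤ ∑ i ∈ A ∩ R, Etil i :=
            Finset.sum_le_sum (fun i hi => hmem i (mem_of_mem_inter_right hi))
        _ ≤ ∑ i ∈ A, Etil i :=
            Finset.sum_le_sum_of_subset_of_nonneg (inter_subset_left)
              (fun i _ _ => hEnn i)
    have hkpos' : (0 : ℝ) < k := by exact_mod_cast hkpos
    have hKpos : (0 : ℝ) < K := by exact_mod_cast hK
    have hmax : (k : ℝ) ≤ max (R.card : ℝ) 1 := le_max_of_le_left hRcard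
    have hmaxpos : (0 : ℝ) < max (R.card : ℝ) 1 := lt_of_lt_of_le hkpos' hmax
    rw [ge_iff_le, FDP, div_le_div_iff₀ (by positivity) hKpos]
    calc ((A ∩ R).card : ℝ) / max (R.card : ℝ) 1 * K
        ≤ ((A ∩ R).card : ℝ) / k * K := by
          gcongr
        _ = ((A ∩ R).card : ℝ) * ((K : ℝ) / (α * k)) * α := by
          field_simp
        _ ≤ (∑ i ∈ A, Etil i) * α := by
          gcongr
end

section
/- Correctness of the dynamic-programming characterization of FDR-hat: for a fixed prefix set R_k of the k largest e-values, the maximum over all A ⊆ [K] of FDP_A(R_k)/E_A equals the maximum over r ∈ [k] and m ∈ {r,...,r+K−k} of (r/k)/E_{A(k,r,m)}, where A(k,r,m) consists of the r indices with smallest e-values inside R_k together with the m−r indices with smallest e-values outside R_k. -/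
open Finset
open scoped Classical

/-- `A(k,r,m)`: the `r` indices with smallest e-values inside `R_k` (the last `r`
positions of the prefix in the `σ`-order) together with the `m − r` indices with
smallest e-values outside `R_k` (the last `m − r` positions in the `σ`-order). -/
noncomputable def Akrm {K : ℕ} (σ : Fin K ≃ Fin K) (k r m : ℕ) : Finset (Fin K) :=
  ((univ.filter (fun i : Fin K => k - r ≤ (i : ℕ) ∧ (i : ℕ) < k)).image σ) ∪
  ((univ.filter (fun i : Fin K => K - (m - r) ≤ (i : ℕ))).image σ)

lemma card_filter_lt' {K : ℕ} (b : ℕ) (hb : b ≤ K) :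
    (univ.filter (fun i : Fin K => (i : ℕ) < b)).card = b := by
  have : (univ.filter (fun i : Fin K => (i : ℕ) < b)) =
      (univ : Finset (Fin b)).map (Fin.castLEEmb hb) := by
    ext i
    simp only [mem_filter, mem_univ, true_and, Finset.mem_map,
      Fin.castLEEmb_apply]
    constructor
    · intro h; exact ⟨⟨i, h⟩, by ext; simp⟩
    · rintro ⟨j, rfl⟩; exact j.isLt
  rw [this, Finset.card_map, Finset.card_univ, Fintype.card_fin]

lemma card_filter_Ico' {K : ℕ} (a b : ℕ) (hab : a ≤ b) (hb : b ≤ K) :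
    (univ.filter (fun i : Fin K => a ≤ (i : ℕ) ∧ (i : ℕ) < b)).card = b - a := by
  have h : (univ.filter (fun i : Fin K => a ≤ (i : ℕ) ∧ (i : ℕ) < b)) =
      (univ.filter (fun i : Fin K => (i : ℕ) < b)) \ (univ.filter (fun i : Fin K => (i : ℕ) < a)) := by
    ext i; simp; omega
  rw [h, Finset.card_sdiff_of_subset (by intro i hi; simp_all; omega),
    card_filter_lt' b hb, card_filter_lt' a (le_trans hab hb)]

/-- The top-`r` positions of `[0,b)` have the smallest `f`-sum among `r`-subsets of `[0,b)`. -/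
lemma tail_sum_le {K : ℕ} (f : Fin K → ℝ) (hf : ∀ i j : Fin K, i ≤ j → f j ≤ f i)
    (b r : ℕ) (hb : b ≤ K) :
    ∀ n : ℕ, ∀ S : Finset (Fin K), S.card = r → (∀ j ∈ S, (j : ℕ) < b) →
      (S \ univ.filter (fun j : Fin K => b - r ≤ (j : ℕ) ∧ (j : ℕ) < b)).card = n →
      ∑ j ∈ univ.filter (fun j : Fin K => b - r ≤ (j : ℕ) ∧ (j : ℕ) < b), f j ≤ ∑ j ∈ S, f j := by
  set T := univ.filter (fun j : Fin K => b - r ≤ (j : ℕ) ∧ (j : ℕ) < b) with hT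
  intro n
  induction n with
  | zero =>
    intro S hcard hlt hn
    have hsub : S ⊆ T := by
      intro x hx
      by_contra hxT
      exact absurd (Finset.card_eq_zero.mp hn ▸ Finset.mem_sdiff.mpr ⟨hx, hxT⟩) (by simp)
    have hrb : r ≤ b := by
      have := Finset.card_le_card (show S ⊆ univ.filter (fun i : Fin K => (i : ℕ) < b) by
        intro x hx; simp [hlt x hx])
      rw [hcard, card_filter_lt' b hb] at this; exact this
    have hTcard : T.card = r := by rw [hT, card_filter_Ico' _ _ (by omega) hb]; omega
    have : S = T := Finset.eq_of_subset_of_card_le hsub (by rw [hTcard, hcard])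
    rw [this]
  | succ n ih =>
    intro S hcard hlt hn
    have hrb : r ≤ b := by
      have := Finset.card_le_card (show S ⊆ univ.filter (fun i : Fin K => (i : ℕ) < b) by
        intro x hx; simp [hlt x hx])
      rw [hcard, card_filter_lt' b hb] at this; exact this
    have hTcard : T.card = r := by rw [hT, card_filter_Ico' _ _ (by omega) hb]; omega
    obtain ⟨s, hs⟩ : (S \ T).Nonempty := by
      rw [← Finset.card_pos, hn]; omega
    have hsS : s ∈ S := (Finset.mem_sdiff.mp hs).1
    have hsT : s ∉ T := (Finset.mem_sdiff.mp hs).2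
    obtain ⟨t, ht⟩ : (T \ S).Nonempty := by
      rw [← Finset.card_pos, Finset.card_sdiff_comm (by rw [hTcard, hcard]), hn]; omega
    have htT : t ∈ T := (Finset.mem_sdiff.mp ht).1
    have htS : t ∉ S := (Finset.mem_sdiff.mp ht).2
    have hsval : (s : ℕ) < b - r := by
      have h1 := hlt s hsS
      by_contra h
      exact hsT (by rw [hT]; simp; omega)
    have htval : b - r ≤ (t : ℕ) := by
      rw [hT] at htT; simp at htT; omega
    have hst : f t ≤ f s := hf s t (by rw [Fin.le_def]; omega)
    set S' := insert t (S.erase s) with hS'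
    have htne : t ∉ S.erase s := fun h => htS (Finset.mem_of_mem_erase h)
    have hcard' : S'.card = r := by
      rw [hS', Finset.card_insert_of_notMem htne, Finset.card_erase_of_mem hsS, hcard]
      have : 1 ≤ r := by rw [← hcard]; exact Finset.card_pos.mpr ⟨s, hsS⟩
      omega
    have hlt' : ∀ j ∈ S', (j : ℕ) < b := by
      intro j hj
      rcases Finset.mem_insert.mp hj with h | h
      · subst h; rw [hT] at htT; simp at htT; exact htT.2
      · exact hlt j (Finset.mem_of_mem_erase h)
    have hsdiff : S' \ T = (S \ T).erase s := by
      ext x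
      simp only [hS', Finset.mem_sdiff, Finset.mem_insert, Finset.mem_erase]
      constructor
      · rintro ⟨h1 | h1, h2⟩
        · exact absurd (h1 ▸ htT) h2
        · exact ⟨h1.1, h1.2, h2⟩
      · rintro ⟨h1, h2, h3⟩; exact ⟨Or.inr ⟨h1, h2⟩, h3⟩
    have hn' : (S' \ T).card = n := by
      rw [hsdiff, Finset.card_erase_of_mem hs, hn]; omega
    have key := ih S' hcard' hlt' hn'
    have hsum : ∑ j ∈ S', f j = f t + (∑ j ∈ S, f j - f s) := by
      rw [hS', Finset.sum_insert htne, Finset.sum_erase_eq_sub hsS]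
    linarith

/-- correctness of the dynamic-programming characterization of `FDR-hat`.
For the prefix `R_k`, the maximum over all nonempty `A` with `A ∩ R_k ≠ ∅` of
`FDP_A(R_k)/E_A` equals the maximum over `r ∈ [k]`, `m ∈ {r,…,r+K−k}` of
`(r/k)/E_{A(k,r,m)}`. -/
theorem stmt16 (K : ℕ) (hK : 0 < K) (E : Fin K → ℝ) (hE : ∀ i, 0 < E i)
    (σ : Fin K ≃ Fin K) (hσ : ∀ i j : Fin K, i ≤ j → E (σ j) ≤ E (σ i))
    (k : ℕ) (hk : 1 ≤ k) (hkK : k ≤ K) :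
    sSup ((fun A : Finset (Fin K) => FDP A (Rk σ k) / ((∑ i ∈ A, E i) / (A.card : ℝ))) ''
        {A : Finset (Fin K) | A.Nonempty ∧ (A ∩ Rk σ k).Nonempty}) =
    sSup {x : ℝ | ∃ r m : ℕ, 1 ≤ r ∧ r ≤ k ∧ r ≤ m ∧ m ≤ r + K - k ∧
        x = ((r : ℝ) / (k : ℝ)) /
          ((∑ i ∈ Akrm σ k r m, E i) / ((Akrm σ k r m).card : ℝ))} := by
  set R := Rk σ k with hR
  have hRcard : R.card = k := by
    rw [hR, Rk, Finset.card_image_of_injective _ σ.injective, card_filter_lt' k hkK]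
  -- basic facts about Akrm for admissible parameters
  have hA4 : ∀ r m : ℕ, 1 ≤ r → r ≤ k → r ≤ m → m ≤ r + K - k →
      (Akrm σ k r m).card = m ∧ ((Akrm σ k r m) ∩ R).card = r ∧
      ∑ i ∈ Akrm σ k r m, E i =
        (∑ j ∈ univ.filter (fun j : Fin K => k - r ≤ (j : ℕ) ∧ (j : ℕ) < k), E (σ j)) +
        (∑ j ∈ univ.filter (fun j : Fin K => K - (m - r) ≤ (j : ℕ) ∧ (j : ℕ) < K), E (σ j)) := by
    intro r m hr1 hrk hrm hm
    set F' := univ.filter (fun j : Fin K => k - r ≤ (j : ℕ) ∧ (j : ℕ) < k) with hF'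
    set G' := univ.filter (fun j : Fin K => K - (m - r) ≤ (j : ℕ) ∧ (j : ℕ) < K) with hG'
    have hG0 : univ.filter (fun i : Fin K => K - (m - r) ≤ (i : ℕ)) = G' := by
      rw [hG']; ext i
      simp only [mem_filter, mem_univ, true_and]
      exact ⟨fun h => ⟨h, i.isLt⟩, fun h => h.1⟩
    have hdisj : Disjoint F' G' := by
      rw [Finset.disjoint_left]
      intro a h1 h2
      rw [hF'] at h1; rw [hG'] at h2
      simp at h1 h2; omega
    have heq : Akrm σ k r m = (F' ∪ G').image σ := by
      rw [Akrm, Finset.image_union, hG0]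
    have hF'card : F'.card = r := by
      rw [hF', card_filter_Ico' _ _ (by omega) hkK]; omega
    have hG'card : G'.card = m - r := by
      rw [hG', card_filter_Ico' _ _ (by omega) le_rfl]; omega
    have hcard : (Akrm σ k r m).card = m := by
      rw [heq, Finset.card_image_of_injective _ σ.injective,
        Finset.card_union_of_disjoint hdisj, hF'card, hG'card]; omega
    have hinterpos : ((F' ∪ G') ∩ univ.filter (fun i : Fin K => (i : ℕ) < k)) = F' := by
      ext i
      rw [hF', hG']
      simp only [Finset.mem_inter, Finset.mem_union, mem_filter, mem_univ, true_and]
      omega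
    have hinter : (Akrm σ k r m) ∩ R = F'.image σ := by
      rw [heq, hR, Rk, ← Finset.image_inter _ _ σ.injective, hinterpos]
    refine ⟨hcard, ?_, ?_⟩
    · rw [hinter, Finset.card_image_of_injective _ σ.injective, hF'card]
    · rw [heq, Finset.sum_image (fun x _ y _ h => σ.injective h),
        Finset.sum_union hdisj]
  -- the two sets
  set S1 : Set ℝ := ((fun A : Finset (Fin K) => FDP A R / ((∑ i ∈ A, E i) / (A.card : ℝ))) ''
      {A : Finset (Fin K) | A.Nonempty ∧ (A ∩ R).Nonempty}) with hS1
  set S2 : Set ℝ := {x : ℝ | ∃ r m : ℕ, 1 ≤ r ∧ r ≤ k ∧ r ≤ m ∧ m ≤ r + K - k ∧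
      x = ((r : ℝ) / (k : ℝ)) /
        ((∑ i ∈ Akrm σ k r m, E i) / ((Akrm σ k r m).card : ℝ))} with hS2
  have hS1fin : S1.Finite := (Set.toFinite _).image _
  have hbdd1 : BddAbove S1 := hS1fin.bddAbove
  -- S2 ⊆ S1
  have hsub : S2 ⊆ S1 := by
    rintro x ⟨r, m, hr1, hrk, hrm, hm, rfl⟩
    obtain ⟨hcard, hinter, -⟩ := hA4 r m hr1 hrk hrm hm
    refine ⟨Akrm σ k r m, ⟨?_, ?_⟩, ?_⟩
    · rw [← Finset.card_pos, hcard]; omega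
    · rw [← Finset.card_pos, hinter]; omega
    · have hFDP : FDP (Akrm σ k r m) R = (r : ℝ) / (k : ℝ) := by
        rw [FDP, hinter, hRcard, max_eq_left (by exact_mod_cast hk)]
      simp only [hFDP]
  have hbdd2 : BddAbove S2 := (hS1fin.subset hsub).bddAbove
  have hS2ne : S2.Nonempty := by
    refine ⟨_, 1, 1, le_rfl, hk, le_rfl, by omega, rfl⟩
  have hS1ne : S1.Nonempty := hS2ne.mono hsub
  -- domination: every element of S1 is dominated by an element of S2
  have hdom : ∀ x ∈ S1, ∃ y ∈ S2, x ≤ y := by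
    rintro x ⟨A, ⟨hA, hAR⟩, rfl⟩
    set r := (A ∩ R).card with hr
    set m := A.card with hmdef
    have hr1 : 1 ≤ r := Finset.card_pos.mpr hAR
    have hrk : r ≤ k := by
      rw [hr, ← hRcard]; exact Finset.card_le_card (Finset.inter_subset_right)
    have hrm : r ≤ m := Finset.card_le_card (Finset.inter_subset_left)
    have hcardAd : (A \ R).card = m - r := by
      have := Finset.card_inter_add_card_sdiff A R
      omega
    have hm : m ≤ r + K - k := by
      have h1 : A \ R ⊆ Rᶜ := by intro i hi; simp at hi ⊢; exact hi.2
      have h2 := Finset.card_le_card h1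
      rw [Finset.card_compl, hRcard, Fintype.card_fin] at h2
      omega
    obtain ⟨hBcard, hBinter, hBsum⟩ := hA4 r m hr1 hrk hrm hm
    -- sums over pulled-back sets
    have hsum1 : ∑ j ∈ (A ∩ R).image σ.symm, E (σ j) = ∑ i ∈ A ∩ R, E i := by
      rw [Finset.sum_image (fun x _ y _ h => σ.symm.injective h)]
      simp
    have hsum2 : ∑ j ∈ (A \ R).image σ.symm, E (σ j) = ∑ i ∈ A \ R, E i := by
      rw [Finset.sum_image (fun x _ y _ h => σ.symm.injective h)]
      simp
    have hB1card : ((A ∩ R).image σ.symm).card = r :=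
      Finset.card_image_of_injective _ σ.symm.injective
    have hB2card : ((A \ R).image σ.symm).card = m - r :=
      hcardAd ▸ Finset.card_image_of_injective _ σ.symm.injective
    have hB1lt : ∀ j ∈ (A ∩ R).image σ.symm, (j : ℕ) < k := by
      intro j hj
      obtain ⟨y, hy, rfl⟩ := Finset.mem_image.mp hj
      have hyR : y ∈ R := (Finset.mem_inter.mp hy).2
      rw [hR, Rk] at hyR
      obtain ⟨p, hp, rfl⟩ := Finset.mem_image.mp hyR
      rw [Equiv.symm_apply_apply]
      simpa using hp
    have hB2lt : ∀ j ∈ (A \ R).image σ.symm, (j : ℕ) < K := fun j _ => j.isLt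
    have ht1 := tail_sum_le (fun j => E (σ j)) hσ k r hkK _ ((A ∩ R).image σ.symm)
      hB1card hB1lt rfl
    have ht2 := tail_sum_le (fun j => E (σ j)) hσ K (m - r) le_rfl _ ((A \ R).image σ.symm)
      hB2card hB2lt rfl
    have hsplitA : ∑ i ∈ A ∩ R, E i + ∑ i ∈ A \ R, E i = ∑ i ∈ A, E i :=
      Finset.sum_inter_add_sum_sdiff A R E
    have hSB_le : ∑ i ∈ Akrm σ k r m, E i ≤ ∑ i ∈ A, E i := by
      rw [hBsum]
      rw [hsum1] at ht1; rw [hsum2] at ht2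
      linarith
    have hSBpos : 0 < ∑ i ∈ Akrm σ k r m, E i :=
      Finset.sum_pos (fun i _ => hE i) (Finset.card_pos.mp (by rw [hBcard]; omega))
    have hm0 : 0 < m := by omega
    have hmR : (0:ℝ) < (m:ℝ) := by exact_mod_cast hm0
    refine ⟨_, ⟨r, m, hr1, hrk, hrm, hm, rfl⟩, ?_⟩
    have hFDP : FDP A R = (r : ℝ) / (k : ℝ) := by
      rw [FDP, hRcard, max_eq_left (by exact_mod_cast hk), ← hr]
    show FDP A R / ((∑ i ∈ A, E i) / (A.card : ℝ)) ≤ _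
    rw [hFDP, hBcard, ← hmdef]
    have hrpos : (0:ℝ) < (r : ℝ) := by exact_mod_cast hr1
    have hkpos : (0:ℝ) < (k : ℝ) := by exact_mod_cast hk
    have hrk0 : (0:ℝ) < (r : ℝ) / (k : ℝ) := div_pos hrpos hkpos
    have h2 : (0:ℝ) < (∑ i ∈ Akrm σ k r m, E i) / (m : ℝ) := div_pos hSBpos hmR
    have h1 : (∑ i ∈ Akrm σ k r m, E i) / (m : ℝ) ≤ (∑ i ∈ A, E i) / (m : ℝ) := by
      gcongr
    exact div_le_div_of_nonneg_left hrk0.le h2 h1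
  -- conclude
  apply le_antisymm
  · refine csSup_le hS1ne ?_
    intro x hx
    obtain ⟨y, hy, hxy⟩ := hdom x hx
    exact le_trans hxy (le_csSup hbdd2 hy)
  · exact csSup_le_csSup hbdd1 hS2ne hsub
end
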